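/- arXiv:2604.05921 — 3 statements merged into one kernel-verified Lean document; each statement's English description precedes it below -/
import Mathlib

section
/- Let V be a finite set, m ≥ 1 an integer, and F : V^m → ℝ any function. Then the sum of F(s) over all tuples s ∈ V^m with pairwise distinct entries equals Σ_{x=0}^{m−1} (−1)^x Σ_{(i,j)} Σ_{s ∈ V^m : s_{i_k} = s_{j_k} for all k ∈ [x]} F(s), where the middle sum ranges over all pairs of index lists i = (i_1 < i_2 < ⋯ < i_x) with each i_k ∈ {2,…,m} and j = (j_1,…,j_x) with each j_k ∈ {1,…,m−1} and j_k < i_k for all k (for x = 0 the middle sum has a single empty term and the inner sum ranges over all of V^m). -/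
open scoped Classical

open Finset

namespace IncExcAux

variable {V : Type*} [Fintype V] {m : ℕ}

/-- number of earlier coordinates equal to `s p` -/
noncomputable def d (s : Fin m → V) (p : Fin m) : ℕ :=
  (univ.filter (fun j : Fin m => j < p ∧ s j = s p)).card

lemma card_j (s : Fin m → V) {x : ℕ} (i : Fin x → Fin m) :
    (univ.filter (fun j : Fin x → Fin m => ∀ k, j k < i k ∧ s (j k) = s (i k))).card
      = ∏ k, d s (i k) := by
  have h : (univ.filter (fun j : Fin x → Fin m => ∀ k, j k < i k ∧ s (j k) = s (i k)))
      = Fintype.piFinset (fun k => univ.filter (fun q : Fin m => q < i k ∧ s q = s (i k))) := by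
    ext j
    simp [Fintype.mem_piFinset]
  rw [h, Fintype.card_piFinset]
  rfl

/-- the inner double count, as a sum over strictly monotone `i` -/
lemma card_A (s : Fin m → V) (x : ℕ) :
    ((univ.filter (fun ij : (Fin x → Fin m) × (Fin x → Fin m) =>
        (StrictMono ij.1 ∧ (∀ k, 1 ≤ (ij.1 k).val) ∧
          (∀ k, (ij.2 k).val + 1 ≤ m - 1) ∧ ∀ k, ij.2 k < ij.1 k) ∧
        ∀ k, s (ij.1 k) = s (ij.2 k))).card : ℝ)
    = ∑ i ∈ univ.filter (fun i : Fin x → Fin m => StrictMono i ∧ ∀ k, 1 ≤ (i k).val),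
        ∏ k, (d s (i k) : ℝ) := by
  have hpred : ∀ ij : (Fin x → Fin m) × (Fin x → Fin m),
      ((StrictMono ij.1 ∧ (∀ k, 1 ≤ (ij.1 k).val) ∧
          (∀ k, (ij.2 k).val + 1 ≤ m - 1) ∧ ∀ k, ij.2 k < ij.1 k) ∧
        ∀ k, s (ij.1 k) = s (ij.2 k))
      ↔ ((StrictMono ij.1 ∧ ∀ k, 1 ≤ (ij.1 k).val) ∧
          ∀ k, ij.2 k < ij.1 k ∧ s (ij.2 k) = s (ij.1 k)) := by
    intro ij
    constructor
    · rintro ⟨⟨h1, h2, _, h4⟩, h5⟩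
      exact ⟨⟨h1, h2⟩, fun k => ⟨h4 k, (h5 k).symm⟩⟩
    · rintro ⟨⟨h1, h2⟩, h⟩
      refine ⟨⟨h1, h2, fun k => ?_, fun k => (h k).1⟩, fun k => ((h k).2).symm⟩
      have hlt : (ij.2 k).val < (ij.1 k).val := (h k).1
      have hle : (ij.1 k).val ≤ m - 1 := Nat.le_sub_one_of_lt (ij.1 k).isLt
      omega
  rw [filter_congr (fun ij _ => by simpa using (hpred ij))]
  -- count fiberwise in the first coordinate
  rw [Finset.card_filter]
  push_cast
  rw [Fintype.sum_prod_type]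
  have step : ∀ i : Fin x → Fin m,
      (∑ y : Fin x → Fin m,
        if (StrictMono i ∧ ∀ k, 1 ≤ (i k).val) ∧ ∀ k, y k < i k ∧ s (y k) = s (i k)
        then (1 : ℝ) else 0)
      = if StrictMono i ∧ ∀ k, 1 ≤ (i k).val then ∏ k, (d s (i k) : ℝ) else 0 := by
    intro i
    by_cases hP : StrictMono i ∧ ∀ k, 1 ≤ (i k).val
    · have hiff : ∀ y : Fin x → Fin m,
          ((StrictMono i ∧ ∀ k, 1 ≤ (i k).val) ∧ ∀ k, y k < i k ∧ s (y k) = s (i k))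
            ↔ (∀ k, y k < i k ∧ s (y k) = s (i k)) := fun y => and_iff_right hP
      rw [if_pos hP]
      simp only [hiff]
      rw [← Finset.sum_filter, Finset.sum_const, nsmul_eq_mul, mul_one, card_j s i]
      push_cast
      rfl
    · simp [hP]
  calc (∑ i : Fin x → Fin m, ∑ y : Fin x → Fin m,
        if (StrictMono i ∧ ∀ k, 1 ≤ (i k).val) ∧ ∀ k, y k < i k ∧ s (y k) = s (i k)
        then (1 : ℝ) else 0)
      = ∑ i : Fin x → Fin m,
          (if StrictMono i ∧ ∀ k, 1 ≤ (i k).val then ∏ k, (d s (i k) : ℝ) else 0) :=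
        Finset.sum_congr rfl (fun i _ => step i)
    _ = _ := by rw [Finset.sum_filter]

/-- reindex the sum over strictly monotone maps as a sum over subsets -/
lemma sum_strictMono (s : Fin m → V) (x : ℕ) :
    (∑ i ∈ univ.filter (fun i : Fin x → Fin m => StrictMono i ∧ ∀ k, 1 ≤ (i k).val),
        ∏ k, (d s (i k) : ℝ))
    = ∑ S ∈ (univ.filter (fun p : Fin m => 1 ≤ p.val)).powersetCard x,
        ∏ p ∈ S, (d s p : ℝ) := by
  refine Finset.sum_bij' (i := fun f _ => Finset.image f Finset.univ)
    (j := fun S hS => (S.orderEmbOfFin (Finset.mem_powersetCard.mp hS).2 : Fin x → Fin m))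
    ?_ ?_ ?_ ?_ ?_
  · intro f hf
    simp only [mem_filter] at hf
    rw [Finset.mem_powersetCard]
    constructor
    · intro p hp
      rcases Finset.mem_image.mp hp with ⟨k, _, rfl⟩
      simp [hf.2.2 k]
    · rw [Finset.card_image_of_injective _ hf.2.1.injective, card_univ, Fintype.card_fin]
  · intro S hS
    simp only [mem_filter, mem_univ, true_and]
    refine ⟨(S.orderEmbOfFin (Finset.mem_powersetCard.mp hS).2).strictMono, fun k => ?_⟩
    have hmem := S.orderEmbOfFin_mem (Finset.mem_powersetCard.mp hS).2 k
    have := (Finset.mem_powersetCard.mp hS).1 hmem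
    simpa using this
  · intro f hf
    simp only [mem_filter] at hf
    have h1 : ∀ k, f k ∈ Finset.image f Finset.univ := fun k => Finset.mem_image_of_mem _ (mem_univ k)
    exact (Finset.orderEmbOfFin_unique _ h1 hf.2.1).symm
  · intro S hS
    apply Finset.coe_injective
    rw [Finset.coe_image, Finset.coe_univ, Set.image_univ]
    exact Finset.range_orderEmbOfFin S (Finset.mem_powersetCard.mp hS).2
  · intro f hf
    simp only [mem_filter] at hf
    rw [Finset.prod_image (fun a _ b _ h => hf.2.1.injective h)]

lemma sign_sum (hm : 1 ≤ m) (s : Fin m → V) :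
    (∑ x ∈ Finset.range m, (-1 : ℝ) ^ x *
        ∑ S ∈ (univ.filter (fun p : Fin m => 1 ≤ p.val)).powersetCard x,
          ∏ p ∈ S, (d s p : ℝ))
    = ∏ p ∈ univ.filter (fun p : Fin m => 1 ≤ p.val), (1 - (d s p : ℝ)) := by
  set T : Finset (Fin m) := univ.filter (fun p : Fin m => 1 ≤ p.val) with hT
  have hTcard : ∀ S : Finset (Fin m), S ⊆ T → S.card < m := by
    intro S hS
    have h0 : (⟨0, hm⟩ : Fin m) ∉ S := by
      intro h
      have := hS h
      rw [hT, mem_filter] at this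
      simpa using this.2
    calc S.card ≤ (Finset.univ.erase (⟨0, hm⟩ : Fin m)).card :=
          Finset.card_le_card (fun p hp => Finset.mem_erase.mpr
            ⟨fun h => h0 (h ▸ hp), mem_univ p⟩)
      _ = m - 1 := by rw [Finset.card_erase_of_mem (mem_univ _), card_univ, Fintype.card_fin]
      _ < m := Nat.sub_lt hm one_pos
  have key : ∏ p ∈ T, (1 - (d s p : ℝ))
      = ∑ t ∈ T.powerset, (-1 : ℝ) ^ t.card * ∏ p ∈ t, (d s p : ℝ) := by
    have : ∀ p ∈ T, (1 - (d s p : ℝ)) = (-(d s p : ℝ)) + 1 := by intro p _; ring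
    rw [Finset.prod_congr rfl this, Finset.prod_add]
    refine Finset.sum_congr rfl (fun t _ => ?_)
    rw [Finset.prod_const_one, mul_one]
    calc ∏ i ∈ t, -(d s i : ℝ) = ∏ i ∈ t, (-1) * (d s i : ℝ) := by
          refine Finset.prod_congr rfl (fun i _ => by ring)
      _ = (-1 : ℝ) ^ t.card * ∏ p ∈ t, (d s p : ℝ) := by
          rw [Finset.prod_mul_distrib, Finset.prod_const]
  rw [key]
  rw [← Finset.sum_fiberwise_of_maps_to (g := fun S : Finset (Fin m) => S.card)
    (t := Finset.range m)
    (fun S hS => Finset.mem_range.mpr (hTcard S (Finset.mem_powerset.mp hS)))]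
  refine Finset.sum_congr rfl (fun x _ => ?_)
  rw [Finset.mul_sum]
  rw [show (T.powerset.filter fun S => S.card = x) = T.powersetCard x from
    (Finset.powersetCard_eq_filter).symm]
  refine Finset.sum_congr rfl (fun S hS => ?_)
  rw [(Finset.mem_powersetCard.mp hS).2]

lemma prod_indicator (s : Fin m → V) :
    (∏ p ∈ univ.filter (fun p : Fin m => 1 ≤ p.val), (1 - (d s p : ℝ)))
    = if Function.Injective s then 1 else 0 := by
  by_cases hinj : Function.Injective s
  · rw [if_pos hinj]
    refine Finset.prod_eq_one (fun p _ => ?_)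
    have : d s p = 0 := by
      rw [d, Finset.card_eq_zero, Finset.filter_eq_empty_iff]
      rintro j - ⟨hlt, heq⟩
      exact absurd (hinj heq) (ne_of_lt hlt)
    rw [this]
    simp
  · rw [if_neg hinj]
    -- find the minimal repeated position
    have hW : (univ.filter (fun p : Fin m => ∃ j, j < p ∧ s j = s p)).Nonempty := by
      rw [Function.not_injective_iff] at hinj
      obtain ⟨a, b, hab, hne⟩ := hinj
      rcases lt_or_gt_of_ne hne with h | h
      · exact ⟨b, by simp only [mem_filter, mem_univ, true_and]; exact ⟨a, h, hab⟩⟩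
      · exact ⟨a, by simp only [mem_filter, mem_univ, true_and]; exact ⟨b, h, hab.symm⟩⟩
    set W := univ.filter (fun p : Fin m => ∃ j, j < p ∧ s j = s p) with hWdef
    set p := W.min' hW with hp
    have hpW : p ∈ W := W.min'_mem hW
    rw [hWdef, mem_filter] at hpW
    obtain ⟨-, j0, hj0lt, hj0eq⟩ := hpW
    have hdp : d s p = 1 := by
      rw [d, Finset.card_eq_one]
      refine ⟨j0, ?_⟩
      ext j
      simp only [mem_filter, mem_univ, true_and, Finset.mem_singleton]
      constructor
      · rintro ⟨hjlt, hjeq⟩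
        by_contra hne
        rcases lt_or_gt_of_ne hne with h | h
        · have hjW : j0 ∈ W := by
            rw [hWdef, mem_filter]
            exact ⟨mem_univ _, j, h, hjeq.trans hj0eq.symm⟩
          exact absurd (W.min'_le _ hjW) (not_le.mpr hj0lt)
        · have hjW : j ∈ W := by
            rw [hWdef, mem_filter]
            exact ⟨mem_univ _, j0, h, hj0eq.trans hjeq.symm⟩
          exact absurd (W.min'_le _ hjW) (not_le.mpr hjlt)
      · rintro rfl
        exact ⟨hj0lt, hj0eq⟩
    refine Finset.prod_eq_zero (i := p) ?_ ?_
    · rw [mem_filter]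
      refine ⟨mem_univ _, ?_⟩
      have : (j0 : ℕ) < (p : ℕ) := hj0lt
      omega
    · rw [hdp]
      norm_num

lemma coeff (hm : 1 ≤ m) (s : Fin m → V) :
    (∑ x ∈ Finset.range m, (-1 : ℝ) ^ x *
      ((univ.filter (fun ij : (Fin x → Fin m) × (Fin x → Fin m) =>
          (StrictMono ij.1 ∧ (∀ k, 1 ≤ (ij.1 k).val) ∧
           (∀ k, (ij.2 k).val + 1 ≤ m - 1) ∧ ∀ k, ij.2 k < ij.1 k) ∧
          ∀ k, s (ij.1 k) = s (ij.2 k))).card : ℝ))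
    = if Function.Injective s then 1 else 0 := by
  calc (∑ x ∈ Finset.range m, (-1 : ℝ) ^ x *
      ((univ.filter (fun ij : (Fin x → Fin m) × (Fin x → Fin m) =>
          (StrictMono ij.1 ∧ (∀ k, 1 ≤ (ij.1 k).val) ∧
           (∀ k, (ij.2 k).val + 1 ≤ m - 1) ∧ ∀ k, ij.2 k < ij.1 k) ∧
          ∀ k, s (ij.1 k) = s (ij.2 k))).card : ℝ))
      = ∑ x ∈ Finset.range m, (-1 : ℝ) ^ x *
          ∑ S ∈ (univ.filter (fun p : Fin m => 1 ≤ p.val)).powersetCard x,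
            ∏ p ∈ S, (d s p : ℝ) := by
        refine Finset.sum_congr rfl (fun x _ => ?_)
        rw [card_A s x, sum_strictMono s x]
    _ = _ := by rw [sign_sum hm s, prod_indicator s]

end IncExcAux

/-- Inclusion–exclusion over copying patterns: the sum of `F` over tuples in
`V^m` with pairwise distinct entries equals
`Σ_{x=0}^{m−1} (−1)^x Σ_{(i,j)} Σ_{s : s_{i_k} = s_{j_k} ∀k} F(s)`,
where `i = (i_1 < ⋯ < i_x)` has entries in `{2,…,m}` and `j = (j_1,…,j_x)` has
entries in `{1,…,m−1}` with `j_k < i_k` for all `k`.  (Indices are realised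
`0`-based via `Fin m`: `i_k ∈ {2,…,m}` becomes `1 ≤ (i k).val`, and
`j_k ∈ {1,…,m−1}` becomes `(j k).val + 1 ≤ m − 1`.) -/
theorem sum_distinct_inclusion_exclusion (V : Type*) [Fintype V] (m : ℕ) (hm : 1 ≤ m)
    (F : (Fin m → V) → ℝ) :
    ∑ s ∈ Finset.univ.filter (fun s : Fin m → V => Function.Injective s), F s =
    ∑ x ∈ Finset.range m, (-1 : ℝ) ^ x *
      ∑ ij ∈ Finset.univ.filter
          (fun ij : (Fin x → Fin m) × (Fin x → Fin m) =>
            StrictMono ij.1 ∧ (∀ k, 1 ≤ (ij.1 k).val) ∧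
            (∀ k, (ij.2 k).val + 1 ≤ m - 1) ∧ ∀ k, ij.2 k < ij.1 k),
        ∑ s ∈ Finset.univ.filter (fun s : Fin m → V => ∀ k, s (ij.1 k) = s (ij.2 k)),
          F s := by
  have step1 : ∀ x : ℕ,
      (∑ ij ∈ Finset.univ.filter
          (fun ij : (Fin x → Fin m) × (Fin x → Fin m) =>
            StrictMono ij.1 ∧ (∀ k, 1 ≤ (ij.1 k).val) ∧
            (∀ k, (ij.2 k).val + 1 ≤ m - 1) ∧ ∀ k, ij.2 k < ij.1 k),
        ∑ s ∈ Finset.univ.filter (fun s : Fin m → V => ∀ k, s (ij.1 k) = s (ij.2 k)), F s)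
      = ∑ s : Fin m → V,
          ((Finset.univ.filter (fun ij : (Fin x → Fin m) × (Fin x → Fin m) =>
            (StrictMono ij.1 ∧ (∀ k, 1 ≤ (ij.1 k).val) ∧
             (∀ k, (ij.2 k).val + 1 ≤ m - 1) ∧ ∀ k, ij.2 k < ij.1 k) ∧
            ∀ k, s (ij.1 k) = s (ij.2 k))).card : ℝ) * F s := by
    intro x
    calc (∑ ij ∈ Finset.univ.filter
          (fun ij : (Fin x → Fin m) × (Fin x → Fin m) =>
            StrictMono ij.1 ∧ (∀ k, 1 ≤ (ij.1 k).val) ∧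
            (∀ k, (ij.2 k).val + 1 ≤ m - 1) ∧ ∀ k, ij.2 k < ij.1 k),
        ∑ s ∈ Finset.univ.filter (fun s : Fin m → V => ∀ k, s (ij.1 k) = s (ij.2 k)), F s)
        = ∑ ij ∈ Finset.univ.filter
            (fun ij : (Fin x → Fin m) × (Fin x → Fin m) =>
              StrictMono ij.1 ∧ (∀ k, 1 ≤ (ij.1 k).val) ∧
              (∀ k, (ij.2 k).val + 1 ≤ m - 1) ∧ ∀ k, ij.2 k < ij.1 k),
            ∑ s : Fin m → V,
              (if ∀ k, s (ij.1 k) = s (ij.2 k) then F s else 0) :=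
          Finset.sum_congr rfl (fun ij _ => Finset.sum_filter _ _)
      _ = ∑ s : Fin m → V, ∑ ij ∈ Finset.univ.filter
            (fun ij : (Fin x → Fin m) × (Fin x → Fin m) =>
              StrictMono ij.1 ∧ (∀ k, 1 ≤ (ij.1 k).val) ∧
              (∀ k, (ij.2 k).val + 1 ≤ m - 1) ∧ ∀ k, ij.2 k < ij.1 k),
              (if ∀ k, s (ij.1 k) = s (ij.2 k) then F s else 0) := Finset.sum_comm
      _ = _ := by
          refine Finset.sum_congr rfl (fun s _ => ?_)
          rw [← Finset.sum_filter, Finset.filter_filter, Finset.sum_const, nsmul_eq_mul]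
  symm
  calc (∑ x ∈ Finset.range m, (-1 : ℝ) ^ x *
      ∑ ij ∈ Finset.univ.filter
          (fun ij : (Fin x → Fin m) × (Fin x → Fin m) =>
            StrictMono ij.1 ∧ (∀ k, 1 ≤ (ij.1 k).val) ∧
            (∀ k, (ij.2 k).val + 1 ≤ m - 1) ∧ ∀ k, ij.2 k < ij.1 k),
        ∑ s ∈ Finset.univ.filter (fun s : Fin m → V => ∀ k, s (ij.1 k) = s (ij.2 k)), F s)
      = ∑ x ∈ Finset.range m, ∑ s : Fin m → V,
          ((-1 : ℝ) ^ x *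
            ((Finset.univ.filter (fun ij : (Fin x → Fin m) × (Fin x → Fin m) =>
              (StrictMono ij.1 ∧ (∀ k, 1 ≤ (ij.1 k).val) ∧
               (∀ k, (ij.2 k).val + 1 ≤ m - 1) ∧ ∀ k, ij.2 k < ij.1 k) ∧
              ∀ k, s (ij.1 k) = s (ij.2 k))).card : ℝ)) * F s := by
        refine Finset.sum_congr rfl (fun x _ => ?_)
        rw [step1 x, Finset.mul_sum]
        exact Finset.sum_congr rfl (fun s _ => by ring)
    _ = ∑ s : Fin m → V,
          (∑ x ∈ Finset.range m, (-1 : ℝ) ^ x *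
            ((Finset.univ.filter (fun ij : (Fin x → Fin m) × (Fin x → Fin m) =>
              (StrictMono ij.1 ∧ (∀ k, 1 ≤ (ij.1 k).val) ∧
               (∀ k, (ij.2 k).val + 1 ≤ m - 1) ∧ ∀ k, ij.2 k < ij.1 k) ∧
              ∀ k, s (ij.1 k) = s (ij.2 k))).card : ℝ)) * F s := by
        rw [Finset.sum_comm]
        exact Finset.sum_congr rfl (fun s _ => (Finset.sum_mul _ _ _).symm)
    _ = ∑ s : Fin m → V, (if Function.Injective s then (1 : ℝ) else 0) * F s := by
        refine Finset.sum_congr rfl (fun s _ => ?_)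
        rw [IncExcAux.coeff hm s]
    _ = ∑ s ∈ Finset.univ.filter (fun s : Fin m → V => Function.Injective s), F s := by
        rw [Finset.sum_filter]
        refine Finset.sum_congr rfl (fun s _ => ?_)
        by_cases h : Function.Injective s <;> simp [h]
end

section
/- Let V be a finite set, δ₁, δ₂ ≥ 1 integers, ω a real number, and f₁^{(i)} : V → ℝ (i ∈ [δ₁]), f₂^{(j)} : V → ℝ (j ∈ [δ₂]) functions. Then Σ_{v ∈ V^{δ₁}} Σ_{w ∈ (V∖{v_1,…,v_{δ₁}})^{δ₂}} (D(v)·D(w))^{ω} ∏_{i=1}^{u(v)} f₁^{(m_{v'_i}(v))}(v'_i) ∏_{j=1}^{u(w)} f₂^{(m_{w'_j}(w))}(w'_j) = Σ_{a ∈ ℕ^{δ₁} : Σ_i i·a_i = δ₁} Σ_{b ∈ ℕ^{δ₂} : Σ_i i·b_i = δ₂} [δ₁!^{1+ω} / ∏_{k=1}^{δ₁}(k!^{(1+ω)a_k} a_k!)] · [δ₂!^{1+ω} / ∏_{k=1}^{δ₂}(k!^{(1+ω)b_k} b_k!)] · Σ*_{s} ∏_{i=1}^{δ₁} ∏_{j=1}^{a_i}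 f₁^{(i)}(s^{(i)}_{1,j}) ∏_{k=1}^{δ₂} ∏_{l=1}^{b_k} f₂^{(k)}(s^{(k)}_{2,l}), where Σ*_{s} denotes the sum over all assignments s of pairwise distinct elements of V to the index set {(1,i,j) : i ∈ [δ₁], j ∈ [a_i]} ∪ {(2,k,l) : k ∈ [δ₂], l ∈ [b_k]} (writing s^{(i)}_{1,j} = s(1,i,j) and s^{(k)}_{2,l} = s(2,k,l)). -/
open scoped Classical

/-- `multCount v u` is the multiplicity `m_u(v)` of `u` in the tuple `v`. -/
noncomputable def multCount {V : Type*} [Fintype V] {δ : ℕ} (v : Fin δ → V) (u : V) : ℕ :=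
  (Finset.univ.filter fun t => v t = u).card

/-- `Dfac v = δ! / ∏_{k=1}^{δ} k!^{a_k(v)}` where `a_k(v)` is the number of
distinct entries of `v` of multiplicity exactly `k`. -/
noncomputable def Dfac {V : Type*} [Fintype V] {δ : ℕ} (v : Fin δ → V) : ℝ :=
  (δ.factorial : ℝ) /
    ∏ k ∈ Finset.Icc 1 δ,
      (k.factorial : ℝ) ^ (Finset.univ.filter fun u : V => multCount v u = k).card

section Aux
open Finset
variable {V : Type*} [Fintype V]
open Finset



lemma multCount_eq_sum {δ : ℕ} (v : Fin δ → V) (u : V) :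
    multCount v u = ∑ t : Fin δ, if v t = u then 1 else 0 := by
  rw [multCount, Finset.card_filter]

lemma sum_multCount {δ : ℕ} (v : Fin δ → V) : ∑ u : V, multCount v u = δ := by
  have := Finset.card_eq_sum_card_fiberwise
    (f := v) (s := (univ : Finset (Fin δ))) (t := (univ : Finset V)) (fun x _ => mem_univ _)
  simpa [multCount] using this.symm

lemma multCount_le {δ : ℕ} (v : Fin δ → V) (u : V) : multCount v u ≤ δ := by
  simpa [multCount] using (Finset.card_filter_le (univ : Finset (Fin δ)) _)

lemma multCount_cons {δ : ℕ} (u0 : V) (r : Fin δ → V) (u : V) :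
    multCount (Fin.cons u0 r) u = (if u0 = u then 1 else 0) + multCount r u := by
  simp only [multCount_eq_sum, Fin.sum_univ_succ, Fin.cons_zero, Fin.cons_succ]

noncomputable def Cnt (δ : ℕ) (φ : V → ℕ) : ℕ :=
  ((univ : Finset (Fin δ → V)).filter fun v => multCount v = φ).card

lemma Cnt_eq_zero {δ : ℕ} {φ : V → ℕ} (h : ∑ u, φ u ≠ δ) : Cnt δ φ = 0 := by
  rw [Cnt, Finset.card_eq_zero, Finset.filter_eq_empty_iff]
  intro v _ hv
  exact h (hv ▸ sum_multCount v)

lemma Cnt_succ (δ : ℕ) (φ : V → ℕ) :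
    Cnt (δ + 1) φ = ∑ u : V, if φ u = 0 then 0 else Cnt δ (Function.update φ u (φ u - 1)) := by
  rw [Cnt, Finset.card_eq_sum_card_fiberwise
    (f := fun v : Fin (δ+1) → V => v 0) (t := (univ : Finset V)) (fun x _ => mem_univ _)]
  refine Finset.sum_congr rfl fun u _ => ?_
  by_cases hu : φ u = 0
  · simp only [hu, if_true]
    rw [Finset.card_eq_zero, Finset.filter_eq_empty_iff]
    rintro v hv
    rw [Finset.mem_filter] at hv
    intro hv0
    have h1 : 1 ≤ multCount v u := by
      rw [multCount]
      refine Finset.card_pos.mpr ⟨0, ?_⟩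
      simp [hv0]
    rw [hv.2] at h1; omega
  · simp only [hu, if_false]
    refine Finset.card_nbij' (fun v => Fin.tail v) (fun r => Fin.cons u r) ?_ ?_ ?_ ?_
    · intro v hv
      simp only [Finset.mem_coe, Finset.mem_filter, Finset.mem_univ, true_and] at hv ⊢
      obtain ⟨hmc, hv0⟩ := hv
      have hv' : v = Fin.cons u (Fin.tail v) := by
        rw [← hv0]; exact (Fin.cons_self_tail v).symm
      funext u'
      have hthis := multCount_cons u (Fin.tail v) u'
      rw [← hv', hmc] at hthis
      by_cases h' : u' = u
      · subst h'
        rw [if_pos rfl] at hthis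
        rw [Function.update_self]; omega
      · rw [Function.update_of_ne h']
        rw [if_neg (Ne.symm h')] at hthis
        omega
    · intro r hr
      simp only [Finset.mem_coe, Finset.mem_filter, Finset.mem_univ, true_and] at hr ⊢
      obtain ⟨hmc, _⟩ := And.intro hr trivial
      constructor
      · funext u'
        rw [multCount_cons, hmc]
        by_cases h' : u' = u
        · subst h'
          rw [if_pos rfl, Function.update_self]; omega
        · rw [if_neg (Ne.symm h'), Function.update_of_ne h', zero_add]
      · simp
    · intro v hv
      simp only [Finset.mem_coe, Finset.mem_filter, Finset.mem_univ, true_and] at hv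
      rw [← hv.2]
      exact Fin.cons_self_tail v
    · intro r _
      funext t
      simp [Fin.tail]


lemma factorial_cast_eq {n : ℕ} (hn : n ≠ 0) :
    (n.factorial : ℝ) = (n : ℝ) * ((n - 1).factorial : ℝ) := by
  obtain ⟨m, rfl⟩ : ∃ m, n = m + 1 := ⟨n - 1, by omega⟩
  simp [Nat.factorial_succ]

lemma Cnt_real {δ : ℕ} {φ : V → ℕ} (h : ∑ u, φ u = δ) :
    (Cnt δ φ : ℝ) = (δ.factorial : ℝ) / ∏ u : V, ((φ u).factorial : ℝ) := by
  induction δ generalizing φ with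
  | zero =>
      have hφ : ∀ u, φ u = 0 := fun u => Finset.sum_eq_zero_iff.mp h u (mem_univ u)
      have hc : Cnt (V := V) 0 φ = 1 := by
        rw [Cnt]
        have : ((univ : Finset (Fin 0 → V)).filter fun v => multCount v = φ) = univ := by
          rw [Finset.filter_eq_self]
          intro v _
          funext u
          simp [multCount, hφ u]
        rw [this]
        simp [Finset.card_univ]
      rw [hc]
      simp [hφ]
  | succ δ ih =>
      rw [Cnt_succ, Nat.cast_sum]
      have key : ∀ u : V, ((if φ u = 0 then 0 else Cnt δ (Function.update φ u (φ u - 1)) : ℕ) : ℝ)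
          = (δ.factorial : ℝ) * (φ u : ℝ) / ∏ u' : V, ((φ u').factorial : ℝ) := by
        intro u
        by_cases hu : φ u = 0
        · simp [hu]
        · simp only [hu, if_false]
          have hsum : ∑ u', Function.update φ u (φ u - 1) u' = δ := by
            rw [Finset.sum_update_of_mem (mem_univ u)]
            have h2 : φ u + ∑ x ∈ univ \ {u}, φ x = δ + 1 := by
              rw [← h, ← Finset.erase_eq]
              exact Finset.add_sum_erase univ φ (mem_univ u)
            omega
          rw [ih hsum]
          have hupd : ∏ u' : V, ((Function.update φ u (φ u - 1) u').factorial : ℝ)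
              = ((φ u - 1).factorial : ℝ) * ∏ u' ∈ univ \ {u}, ((φ u').factorial : ℝ) := by
            rw [← Finset.prod_update_of_mem (mem_univ u)]
            apply Finset.prod_congr rfl
            intro u' hu'
            by_cases h' : u' = u
            · subst h'; simp
            · rw [Function.update_of_ne h', Function.update_of_ne h']
          have hφu : ∏ u' : V, ((φ u').factorial : ℝ)
              = (φ u : ℝ) * (((φ u - 1).factorial : ℝ) * ∏ u' ∈ univ \ {u}, ((φ u').factorial : ℝ)) := by
            have := Finset.prod_update_of_mem (mem_univ u) (fun u' => ((φ u').factorial : ℝ))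
              ((φ u).factorial : ℝ)
            have heq : ∏ u' : V, ((φ u').factorial : ℝ)
                = ((φ u).factorial : ℝ) * ∏ u' ∈ univ \ {u}, ((φ u').factorial : ℝ) := by
              rw [← this]
              apply Finset.prod_congr rfl
              intro u' hu'
              by_cases h' : u' = u
              · subst h'; simp
              · rw [Function.update_of_ne h']
            rw [heq, factorial_cast_eq hu]
            ring
          rw [hupd, hφu]
          have hpos : (0:ℝ) < ((φ u - 1).factorial : ℝ) := by exact_mod_cast Nat.factorial_pos _
          have hpos2 : (0:ℝ) < ∏ u' ∈ univ \ {u}, ((φ u').factorial : ℝ) := by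
            apply Finset.prod_pos; intro u' _; exact_mod_cast Nat.factorial_pos _
          have hφupos : (0:ℝ) < (φ u : ℝ) := by
            exact_mod_cast Nat.pos_of_ne_zero hu
          field_simp
      rw [Finset.sum_congr rfl (fun u _ => key u)]
      rw [← Finset.sum_div, ← Finset.mul_sum]
      have hc : ∑ u : V, (φ u : ℝ) = ((δ + 1 : ℕ) : ℝ) := by
        rw [← Nat.cast_sum, h]
      rw [hc, Nat.factorial_succ]
      push_cast
      ring
-- part 2 (appended to part1 when testing)
noncomputable def Tv {δ : ℕ} (v : Fin δ → V) : Fin δ → Finset V :=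
  fun i => univ.filter fun u => multCount v u = i.1 + 1

def PD {ι : Type*} (T : ι → Finset V) : Prop := ∀ x y, x ≠ y → Disjoint (T x) (T y)

noncomputable def phiT {δ : ℕ} (T : Fin δ → Finset V) (u : V) : ℕ :=
  ∑ i : Fin δ, (i.1 + 1) * (if u ∈ T i then 1 else 0)

lemma phiT_Tv {δ : ℕ} (v : Fin δ → V) : phiT (Tv v) = multCount v := by
  funext u
  rw [phiT]
  rcases Nat.eq_zero_or_pos (multCount v u) with h0 | hpos
  · rw [h0]
    apply Finset.sum_eq_zero
    intro i _
    have : u ∉ Tv v i := by simp [Tv, h0]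
    simp [this]
  · obtain ⟨m, hm⟩ : ∃ m, multCount v u = m + 1 := ⟨multCount v u - 1, by omega⟩
    have hmδ : m < δ := by have := multCount_le v u; omega
    rw [hm]
    rw [Finset.sum_eq_single (⟨m, hmδ⟩ : Fin δ)]
    · have : u ∈ Tv v ⟨m, hmδ⟩ := by simp [Tv, hm]
      simp [this]
    · intro i _ hi
      have : u ∉ Tv v i := by
        simp only [Tv, Finset.mem_filter, mem_univ, true_and, hm]
        intro hc
        apply hi
        apply Fin.ext
        simp only [Fin.val_mk]
        omega
      simp [this]
    · intro h; exact absurd (mem_univ _) h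

lemma Tv_pd {δ : ℕ} (v : Fin δ → V) : PD (Tv v) := by
  intro x y hxy
  rw [Finset.disjoint_left]
  intro u hx hy
  simp only [Tv, Finset.mem_filter, mem_univ, true_and] at hx hy
  exact hxy (Fin.ext (by omega))

lemma sum_phiT {δ : ℕ} (T : Fin δ → Finset V) :
    ∑ u : V, phiT T u = ∑ i : Fin δ, (i.1 + 1) * (T i).card := by
  have h0 : ∑ u : V, phiT T u
      = ∑ u : V, ∑ i : Fin δ, (i.1 + 1) * (if u ∈ T i then 1 else 0) := rfl
  rw [h0, Finset.sum_comm]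
  apply Finset.sum_congr rfl
  intro i _
  rw [← Finset.mul_sum]
  congr 1
  rw [← Finset.card_filter]
  simp [Finset.filter_mem_eq_inter, Finset.univ_inter]

noncomputable def TF (δ : ℕ) : Finset (Fin δ → Finset V) :=
  univ.filter fun T => PD T ∧ ∑ i : Fin δ, (i.1 + 1) * (T i).card = δ

lemma Tv_mem {δ : ℕ} (v : Fin δ → V) : Tv v ∈ TF (V := V) δ := by
  rw [TF, Finset.mem_filter]
  refine ⟨mem_univ _, Tv_pd v, ?_⟩
  rw [← sum_phiT, phiT_Tv]
  exact sum_multCount v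

lemma phiT_eq_of_mem {δ : ℕ} {T : Fin δ → Finset V} (hpd : PD T) {u : V} {i : Fin δ}
    (hi : u ∈ T i) : phiT T u = i.1 + 1 := by
  rw [phiT, Finset.sum_eq_single i]
  · simp [hi]
  · intro j _ hj
    have : u ∉ T j := fun hc => (Finset.disjoint_left.mp (hpd j i hj) hc) hi
    simp [this]
  · intro h; exact absurd (mem_univ _) h

lemma phiT_eq_zero {δ : ℕ} {T : Fin δ → Finset V} {u : V} (h : ∀ i, u ∉ T i) :
    phiT T u = 0 := by
  rw [phiT]
  apply Finset.sum_eq_zero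
  intro i _
  simp [h i]

lemma Tv_eq_iff {δ : ℕ} {T : Fin δ → Finset V} (hpd : PD T) (v : Fin δ → V) :
    Tv v = T ↔ multCount v = phiT T := by
  constructor
  · intro h
    rw [← h, phiT_Tv]
  · intro h
    funext i
    ext u
    simp only [Tv, Finset.mem_filter, mem_univ, true_and, h]
    constructor
    · intro hu
      by_contra hc
      rcases Nat.eq_zero_or_pos (phiT T u) with h0 | hpos
      · omega
      · have : ∃ j, u ∈ T j := by
          by_contra hnj
          push_neg at hnj
          rw [phiT_eq_zero hnj] at hpos
          omega
        obtain ⟨j, hj⟩ := this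
        have := phiT_eq_of_mem hpd hj
        have hji : j ≠ i := fun he => hc (he ▸ hj)
        have : j.1 = i.1 := by omega
        exact hji (Fin.ext this)
    · intro hu
      exact phiT_eq_of_mem hpd hu

lemma cardTv {δ : ℕ} {T : Fin δ → Finset V} (hT : T ∈ TF (V := V) δ) :
    (((univ : Finset (Fin δ → V)).filter fun v => Tv v = T).card : ℝ)
      = (δ.factorial : ℝ) / ∏ i : Fin δ, (((i.1 + 1).factorial : ℝ)) ^ (T i).card := by
  rw [TF, Finset.mem_filter] at hT
  obtain ⟨-, hpd, hsum⟩ := hT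
  have hfe : ((univ : Finset (Fin δ → V)).filter fun v => Tv v = T)
      = ((univ : Finset (Fin δ → V)).filter fun v => multCount v = phiT T) := by
    apply Finset.filter_congr
    intro v _
    exact Tv_eq_iff hpd v
  rw [hfe]
  have hsum' : ∑ u : V, phiT T u = δ := by rw [sum_phiT]; exact hsum
  have := Cnt_real (δ := δ) (φ := phiT T) hsum'
  rw [Cnt] at this
  rw [this]
  congr 1
  -- ∏ u, (phiT T u)! = ∏ i, ((i+1)!)^(T i).card
  have key : ∀ u : V, ((phiT T u).factorial : ℝ)
      = ∏ i : Fin δ, (if u ∈ T i then (((i.1 + 1).factorial : ℝ)) else 1) := by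
    intro u
    by_cases hu : ∃ i, u ∈ T i
    · obtain ⟨i, hi⟩ := hu
      rw [phiT_eq_of_mem hpd hi, Finset.prod_eq_single i]
      · simp [hi]
      · intro j _ hj
        have : u ∉ T j := fun hc => (Finset.disjoint_left.mp (hpd j i hj) hc) hi
        simp [this]
      · intro h; exact absurd (mem_univ _) h
    · push_neg at hu
      rw [phiT_eq_zero hu]
      rw [Finset.prod_congr rfl (fun i _ => if_neg (hu i))]
      simp
  rw [Finset.prod_congr rfl (fun u _ => key u), Finset.prod_comm]
  apply Finset.prod_congr rfl
  intro i _
  rw [Finset.prod_ite_mem]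
  simp [Finset.prod_const]

lemma SUM1T {δ : ℕ} (G : (Fin δ → Finset V) → ℝ) :
    ∑ v : Fin δ → V, G (Tv v)
      = ∑ T ∈ TF (V := V) δ,
          ((δ.factorial : ℝ) / ∏ i : Fin δ, (((i.1 + 1).factorial : ℝ)) ^ (T i).card) * G T := by
  rw [← Finset.sum_fiberwise_of_maps_to (g := fun v : Fin δ → V => Tv v) (t := TF (V := V) δ)
    (fun v _ => Tv_mem v) (fun v => G (Tv v))]
  apply Finset.sum_congr rfl
  intro T hT
  have hconst : ∑ v ∈ univ.filter (fun v : Fin δ → V => Tv v = T), G (Tv v)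
      = ∑ _v ∈ univ.filter (fun v : Fin δ → V => Tv v = T), G T :=
    Finset.sum_congr rfl (fun v hv => by rw [(Finset.mem_filter.mp hv).2])
  rw [hconst, Finset.sum_const, nsmul_eq_mul, cardTv hT]
-- part 3
section Inj
variable {ι : Type*} [Fintype ι] [DecidableEq ι]

noncomputable def rows (c : ι → ℕ) (s : (Σ x : ι, Fin (c x)) → V) : ι → Finset V :=
  fun x => univ.image fun j : Fin (c x) => s ⟨x, j⟩

lemma row_inj {c : ι → ℕ} {s : (Σ x : ι, Fin (c x)) → V} (hs : Function.Injective s) (x : ι) :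
    Function.Injective fun j : Fin (c x) => s ⟨x, j⟩ := by
  intro j j' h
  have := hs h
  rw [Sigma.mk.inj_iff] at this
  exact eq_of_heq this.2

lemma rows_card {c : ι → ℕ} {s : (Σ x : ι, Fin (c x)) → V} (hs : Function.Injective s) (x : ι) :
    (rows c s x).card = c x := by
  rw [rows, Finset.card_image_of_injective _ (row_inj hs x)]
  simp

lemma rows_pd {c : ι → ℕ} {s : (Σ x : ι, Fin (c x)) → V} (hs : Function.Injective s) :
    PD (rows c s) := by
  intro x y hxy
  rw [Finset.disjoint_left]
  intro u hx hy
  simp only [rows, Finset.mem_image, mem_univ, true_and] at hx hy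
  obtain ⟨j, hj⟩ := hx
  obtain ⟨j', hj'⟩ := hy
  apply hxy
  have := hs (hj.trans hj'.symm)
  rw [Sigma.mk.inj_iff] at this
  exact this.1

noncomputable def injEquiv (c : ι → ℕ) (T : ι → Finset V) (hpd : PD T)
    (hcard : ∀ x, (T x).card = c x) :
    {s : (Σ x : ι, Fin (c x)) → V // Function.Injective s ∧ rows c s = T}
      ≃ (∀ x : ι, Fin (c x) ≃ {u // u ∈ T x}) where
  toFun s := fun x => Equiv.ofBijective
    (fun j => (⟨s.1 ⟨x, j⟩, by
      have : rows c s.1 x = T x := congrFun s.2.2 x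
      rw [← this, rows]
      exact Finset.mem_image_of_mem _ (mem_univ j)⟩ : {u // u ∈ T x}))
    (by
      rw [Fintype.bijective_iff_injective_and_card]
      constructor
      · intro j j' h
        exact row_inj s.2.1 x (congrArg Subtype.val h)
      · simp [Fintype.card_coe, hcard x])
  invFun e := ⟨fun p => (e p.1 p.2 : V), by
      constructor
      · rintro ⟨x, j⟩ ⟨y, j'⟩ h
        dsimp at h
        have hxy : x = y := by
          by_contra hc
          have h1 : ((e x j : {u // u ∈ T x}) : V) ∈ T x := (e x j).2
          have h2 : ((e y j' : {u // u ∈ T y}) : V) ∈ T y := (e y j').2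
          rw [h] at h1
          exact (Finset.disjoint_left.mp (hpd x y hc) (h ▸ (e x j).2)) h2
        subst hxy
        have : e x j = e x j' := Subtype.ext h
        rw [(e x).injective this]
      · funext x
        ext u
        simp only [rows, Finset.mem_image, mem_univ, true_and]
        constructor
        · rintro ⟨j, rfl⟩
          exact (e x j).2
        · intro hu
          obtain ⟨j, hj⟩ := (e x).surjective ⟨u, hu⟩
          exact ⟨j, by rw [hj]⟩⟩
  left_inv s := by
    apply Subtype.ext
    funext p
    rcases p with ⟨x, j⟩
    rfl
  right_inv e := by
    funext x
    apply Equiv.ext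
    intro j
    apply Subtype.ext
    rfl

lemma CNT2 (c : ι → ℕ) (T : ι → Finset V) (hpd : PD T) (hcard : ∀ x, (T x).card = c x) :
    ((univ : Finset ((Σ x : ι, Fin (c x)) → V)).filter
        fun s => Function.Injective s ∧ rows c s = T).card
      = ∏ x : ι, (c x).factorial := by
  classical
  rw [← Fintype.card_subtype]
  rw [Fintype.card_congr (injEquiv c T hpd hcard)]
  rw [Fintype.card_pi]
  apply Finset.prod_congr rfl
  intro x _
  have hx : Fintype.card (Fin (c x)) = Fintype.card {u // u ∈ T x} := by
    simp [Fintype.card_coe, hcard x]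
  rw [Fintype.card_equiv (Fintype.equivOfCardEq hx)]
  simp

noncomputable def TFc (c : ι → ℕ) : Finset (ι → Finset V) :=
  univ.filter fun T => PD T ∧ ∀ x, (T x).card = c x

lemma SUM3 (c : ι → ℕ) (H : (ι → Finset V) → ℝ) :
    ∑ s ∈ (univ : Finset ((Σ x : ι, Fin (c x)) → V)).filter (fun s => Function.Injective s),
        H (rows c s)
      = ∑ T ∈ TFc (V := V) c, (∏ x : ι, ((c x).factorial : ℝ)) * H T := by
  rw [← Finset.sum_fiberwise_of_maps_to (g := fun s => rows c s) (t := TFc (V := V) c)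
    (fun s hs => by
      rw [Finset.mem_filter] at hs
      rw [TFc, Finset.mem_filter]
      exact ⟨mem_univ _, rows_pd hs.2, rows_card hs.2⟩)
    (fun s => H (rows c s))]
  apply Finset.sum_congr rfl
  intro T hT
  rw [TFc, Finset.mem_filter] at hT
  obtain ⟨-, hpd, hcard⟩ := hT
  have hconst : ∑ s ∈ ((univ : Finset ((Σ x : ι, Fin (c x)) → V)).filter
        (fun s => Function.Injective s)).filter (fun s => rows c s = T), H (rows c s)
      = ∑ _s ∈ ((univ : Finset ((Σ x : ι, Fin (c x)) → V)).filter
        (fun s => Function.Injective s)).filter (fun s => rows c s = T), H T :=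
    Finset.sum_congr rfl (fun s hs => by rw [(Finset.mem_filter.mp hs).2])
  rw [hconst, Finset.sum_const, nsmul_eq_mul]
  congr 1
  rw [Finset.filter_filter]
  rw [CNT2 c T hpd hcard]
  push_cast
  rfl

end Inj

lemma mem_TFc {ι : Type*} [Fintype ι] [DecidableEq ι] {c : ι → ℕ} {T : ι → Finset V} :
    T ∈ TFc (V := V) c ↔ PD T ∧ ∀ x, (T x).card = c x := by
  rw [TFc, Finset.mem_filter]
  simp only [Finset.mem_univ, true_and]
-- part 4
noncomputable def MT {δ : ℕ} (T : Fin δ → Finset V) : ℝ :=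
  (δ.factorial : ℝ) / ∏ i : Fin δ, (((i.1 + 1).factorial : ℝ)) ^ (T i).card

lemma prod_shift (δ : ℕ) (g : ℕ → ℝ) :
    ∏ i ∈ Finset.range δ, g (i + 1) = ∏ k ∈ Finset.Icc 1 δ, g k := by
  refine Finset.prod_nbij' (fun i => i + 1) (fun k => k - 1) ?_ ?_ ?_ ?_ ?_ <;>
    intro x hx <;>
    simp only [Finset.mem_range, Finset.mem_Icc] at * <;>
    first
      | omega
      | rfl

lemma MT_pos {δ : ℕ} (T : Fin δ → Finset V) : 0 < MT T := by
  rw [MT]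
  apply div_pos
  · exact_mod_cast δ.factorial_pos
  · apply Finset.prod_pos
    intro i _
    apply pow_pos
    exact_mod_cast (i.1 + 1).factorial_pos

lemma Dfac_eq {δ : ℕ} (v : Fin δ → V) : Dfac v = MT (Tv v) := by
  rw [Dfac, MT]
  congr 1
  rw [← prod_shift δ (fun k => (k.factorial : ℝ) ^
      (Finset.univ.filter fun u : V => multCount v u = k).card)]
  rw [← Fin.prod_univ_eq_prod_range (fun n => ((n+1).factorial : ℝ) ^
      (Finset.univ.filter fun u : V => multCount v u = n + 1).card)]
  rfl

lemma mem_Tv_iff {δ : ℕ} {v : Fin δ → V} {u : V} {i : Fin δ} :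
    u ∈ Tv v i ↔ multCount v u = i.1 + 1 := by
  simp [Tv]

lemma multCount_pos_iff {δ : ℕ} {v : Fin δ → V} {u : V} :
    0 < multCount v u ↔ ∃ t, v t = u := by
  rw [multCount, Finset.card_pos]
  constructor
  · rintro ⟨t, ht⟩
    rw [Finset.mem_filter] at ht
    exact ⟨t, ht.2⟩
  · rintro ⟨t, ht⟩
    exact ⟨t, by simp [ht]⟩

lemma exists_mem_Tv_iff {δ : ℕ} {v : Fin δ → V} {u : V} :
    (∃ i, u ∈ Tv v i) ↔ 0 < multCount v u := by
  constructor
  · rintro ⟨i, hi⟩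
    rw [mem_Tv_iff] at hi
    omega
  · intro h
    have hle := multCount_le v u
    refine ⟨⟨multCount v u - 1, by omega⟩, ?_⟩
    rw [mem_Tv_iff]
    simp only [Fin.val_mk]
    omega

lemma image_eq_biUnion {δ : ℕ} (v : Fin δ → V) :
    Finset.univ.image v = Finset.univ.biUnion (Tv v) := by
  ext u
  rw [Finset.mem_image, Finset.mem_biUnion]
  constructor
  · rintro ⟨t, _, rfl⟩
    obtain ⟨i, hi⟩ := exists_mem_Tv_iff.mpr ((multCount_pos_iff (v := v)).mpr ⟨t, rfl⟩)
    exact ⟨i, mem_univ _, hi⟩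
  · rintro ⟨i, _, hi⟩
    obtain ⟨t, ht⟩ := multCount_pos_iff.mp (exists_mem_Tv_iff.mp ⟨i, hi⟩)
    exact ⟨t, mem_univ _, ht⟩

lemma prodF {δ : ℕ} (v : Fin δ → V) (f : ℕ → V → ℝ) :
    ∏ u ∈ Finset.univ.image v, f (multCount v u) u
      = ∏ i : Fin δ, ∏ u ∈ Tv v i, f (i.1 + 1) u := by
  rw [image_eq_biUnion]
  rw [Finset.prod_biUnion (fun x _ y _ hxy => Tv_pd v x y hxy)]
  apply Finset.prod_congr rfl
  intro i _
  apply Finset.prod_congr rfl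
  intro u hu
  rw [mem_Tv_iff.mp hu]

def DJ {ι₁ ι₂ : Type*} (T₁ : ι₁ → Finset V) (T₂ : ι₂ → Finset V) : Prop :=
  ∀ i k, Disjoint (T₁ i) (T₂ k)

lemma avoid_iff {δ₁ δ₂ : ℕ} (v : Fin δ₁ → V) (w : Fin δ₂ → V) :
    (∀ j t, w j ≠ v t) ↔ DJ (Tv v) (Tv w) := by
  constructor
  · intro h i k
    rw [Finset.disjoint_left]
    intro u hu hu'
    obtain ⟨t, ht⟩ := multCount_pos_iff.mp (exists_mem_Tv_iff.mp ⟨i, hu⟩)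
    obtain ⟨j, hj⟩ := multCount_pos_iff.mp (exists_mem_Tv_iff.mp ⟨k, hu'⟩)
    exact h j t (hj.trans ht.symm)
  · intro h j t he
    obtain ⟨i, hi⟩ := exists_mem_Tv_iff.mpr ((multCount_pos_iff (v := v)).mpr ⟨t, rfl⟩)
    obtain ⟨k, hk⟩ := exists_mem_Tv_iff.mpr ((multCount_pos_iff (v := w)).mpr ⟨j, he⟩)
    exact (Finset.disjoint_left.mp (h i k) hi) hk
-- part 5
noncomputable def Prof (δ : ℕ) : Finset (Fin δ → ℕ) :=
  (Fintype.piFinset fun _ : Fin δ => Finset.range (δ + 1)).filter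
    fun a => ∑ i : Fin δ, (i.1 + 1) * a i = δ

lemma mem_Prof {δ : ℕ} {a : Fin δ → ℕ} :
    a ∈ Prof δ ↔ ∑ i : Fin δ, (i.1 + 1) * a i = δ := by
  rw [Prof, Finset.mem_filter]
  constructor
  · exact fun h => h.2
  · intro h
    refine ⟨?_, h⟩
    rw [Fintype.mem_piFinset]
    intro i
    rw [Finset.mem_range]
    have hle := Finset.single_le_sum
      (f := fun i : Fin δ => (i.1 + 1) * a i) (fun _ _ => Nat.zero_le _) (mem_univ i)
    rw [h] at hle
    have : a i ≤ (i.1 + 1) * a i := Nat.le_mul_of_pos_left (a i) (Nat.succ_pos _)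
    omega

noncomputable def MS (δ : ℕ) (a : Fin δ → ℕ) : ℝ :=
  (δ.factorial : ℝ) / ∏ i : Fin δ, (((i.1 + 1).factorial : ℝ)) ^ (a i)

lemma MS_pos (δ : ℕ) (a : Fin δ → ℕ) : 0 < MS δ a := by
  rw [MS]
  apply div_pos
  · exact_mod_cast δ.factorial_pos
  · exact Finset.prod_pos fun i _ => pow_pos (by exact_mod_cast (i.1+1).factorial_pos) _

lemma MT_eq_MS {δ : ℕ} {T : Fin δ → Finset V} {a : Fin δ → ℕ}
    (h : ∀ i, (T i).card = a i) : MT T = MS δ a := by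
  rw [MT, MS]
  congr 1
  exact Finset.prod_congr rfl fun i _ => by rw [h i]

lemma group_cards {δ : ℕ} (g : (Fin δ → Finset V) → ℝ) :
    ∑ T ∈ TF (V := V) δ, g T = ∑ a ∈ Prof δ, ∑ T ∈ TFc (V := V) a, g T := by
  rw [← Finset.sum_fiberwise_of_maps_to (g := fun T : Fin δ → Finset V => fun i => (T i).card)
    (t := Prof δ) (fun T hT => by
      rw [TF, Finset.mem_filter] at hT
      exact mem_Prof.mpr hT.2.2) g]
  apply Finset.sum_congr rfl
  intro a ha
  refine Finset.sum_congr ?_ (fun _ _ => rfl)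
  ext T
  simp only [TF, TFc, Finset.mem_filter, Finset.mem_univ, true_and]
  constructor
  · rintro ⟨⟨hpd, -⟩, hc⟩
    exact ⟨hpd, fun i => congrFun hc i⟩
  · rintro ⟨hpd, hc⟩
    have hs : ∑ i : Fin δ, (i.1 + 1) * (T i).card = ∑ i : Fin δ, (i.1 + 1) * a i :=
      Finset.sum_congr rfl (fun i _ => by rw [hc i])
    exact ⟨⟨hpd, by rw [hs]; exact mem_Prof.mp ha⟩, funext hc⟩

lemma scalar_one_side (δ : ℕ) (ω : ℝ) (a : Fin δ → ℕ) :
    ((δ.factorial : ℝ) ^ (1 + ω) /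
        ∏ i : Fin δ, (((i.1 + 1).factorial : ℝ) ^ ((1 + ω) * (a i : ℝ)) * ((a i).factorial : ℝ)))
      * ∏ i : Fin δ, ((a i).factorial : ℝ)
      = MS δ a * MS δ a ^ ω := by
  have hfac : (0:ℝ) < (δ.factorial : ℝ) := by exact_mod_cast δ.factorial_pos
  have hyi : ∀ i : Fin δ, (0:ℝ) < (((i.1 + 1).factorial : ℝ)) := fun i => by
    exact_mod_cast (i.1+1).factorial_pos
  have hP : (0:ℝ) < ∏ i : Fin δ, (((i.1 + 1).factorial : ℝ)) ^ (a i) :=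
    Finset.prod_pos fun i _ => pow_pos (hyi i) _
  have hQ : (0:ℝ) < ∏ i : Fin δ, ((a i).factorial : ℝ) :=
    Finset.prod_pos fun i _ => by exact_mod_cast (a i).factorial_pos
  have hrw : ∀ i : Fin δ, ((i.1 + 1).factorial : ℝ) ^ ((1 + ω) * (a i : ℝ))
      = ((((i.1 + 1).factorial : ℝ)) ^ (a i)) ^ (1 + ω) := by
    intro i
    rw [← Real.rpow_natCast (((i.1 + 1).factorial : ℝ)) (a i),
      ← Real.rpow_mul (le_of_lt (hyi i)), mul_comm]
  have hsplit : ∏ i : Fin δ, (((i.1 + 1).factorial : ℝ) ^ ((1 + ω) * (a i : ℝ))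
        * ((a i).factorial : ℝ))
      = (∏ i : Fin δ, (((i.1 + 1).factorial : ℝ)) ^ (a i)) ^ (1 + ω)
        * ∏ i : Fin δ, ((a i).factorial : ℝ) := by
    rw [Finset.prod_mul_distrib]
    congr 1
    rw [Finset.prod_congr rfl fun i _ => hrw i]
    rw [Real.finset_prod_rpow _ _ (fun i _ => le_of_lt (pow_pos (hyi i) _))]
  rw [hsplit]
  have hMS : MS δ a ^ (1 + ω)
      = (δ.factorial : ℝ) ^ (1 + ω) / (∏ i : Fin δ, (((i.1 + 1).factorial : ℝ)) ^ (a i)) ^ (1 + ω) := by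
    rw [MS, Real.div_rpow (le_of_lt hfac) (le_of_lt hP)]
  have hMS2 : MS δ a * MS δ a ^ ω = MS δ a ^ (1 + ω) := by
    rw [Real.rpow_add (MS_pos δ a), Real.rpow_one]
  rw [hMS2, hMS]
  have hPpow : (0:ℝ) < (∏ i : Fin δ, (((i.1 + 1).factorial : ℝ)) ^ (a i)) ^ (1 + ω) :=
    Real.rpow_pos_of_pos hP _
  field_simp
-- part 6
noncomputable def FP (f : ℕ → V → ℝ) {δ : ℕ} (T : Fin δ → Finset V) : ℝ :=
  ∏ i : Fin δ, ∏ u ∈ T i, f (i.1 + 1) u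

lemma prodF' {δ : ℕ} (v : Fin δ → V) (f : ℕ → V → ℝ) :
    ∏ u ∈ Finset.univ.image v, f (multCount v u) u = FP f (Tv v) :=
  prodF v f

section Two
variable {δ₁ δ₂ : ℕ}

def slotEquiv (a : Fin δ₁ → ℕ) (b : Fin δ₂ → ℕ) :
    ((Σ i : Fin δ₁, Fin (a i)) ⊕ (Σ k : Fin δ₂, Fin (b k)))
      ≃ (Σ x : Fin δ₁ ⊕ Fin δ₂, Fin (Sum.elim a b x)) where
  toFun := Sum.elim (fun p => ⟨Sum.inl p.1, p.2⟩) (fun p => ⟨Sum.inr p.1, p.2⟩)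
  invFun p := match p with
    | ⟨Sum.inl i, j⟩ => Sum.inl ⟨i, j⟩
    | ⟨Sum.inr k, l⟩ => Sum.inr ⟨k, l⟩
  left_inv := by rintro (⟨i, j⟩ | ⟨k, l⟩) <;> rfl
  right_inv := by rintro ⟨(i | k), j⟩ <;> rfl

lemma sum_inj_transport (a : Fin δ₁ → ℕ) (b : Fin δ₂ → ℕ)
    (F : (((Σ i : Fin δ₁, Fin (a i)) ⊕ (Σ k : Fin δ₂, Fin (b k))) → V) → ℝ) :
    ∑ s ∈ Finset.univ.filter
        (fun s : ((Σ i : Fin δ₁, Fin (a i)) ⊕ (Σ k : Fin δ₂, Fin (b k))) → V =>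
          Function.Injective s), F s
      = ∑ σ ∈ Finset.univ.filter
          (fun σ : (Σ x : Fin δ₁ ⊕ Fin δ₂, Fin (Sum.elim a b x)) → V =>
            Function.Injective σ), F (σ ∘ slotEquiv a b) := by
  refine Finset.sum_nbij' (fun s => s ∘ (slotEquiv a b).symm) (fun σ => σ ∘ slotEquiv a b)
    ?_ ?_ ?_ ?_ ?_
  · intro s hs
    rw [Finset.mem_filter] at hs ⊢
    exact ⟨mem_univ _, hs.2.comp (slotEquiv a b).symm.injective⟩
  · intro σ hσ
    rw [Finset.mem_filter] at hσ ⊢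
    exact ⟨mem_univ _, hσ.2.comp (slotEquiv a b).injective⟩
  · intro s _
    funext p
    simp [Function.comp]
  · intro σ _
    funext p
    simp [Function.comp]
  · intro s _
    congr 1
    funext p
    simp [Function.comp]

lemma split_TFc (a : Fin δ₁ → ℕ) (b : Fin δ₂ → ℕ)
    (g : (Fin δ₁ → Finset V) → (Fin δ₂ → Finset V) → ℝ) :
    ∑ T ∈ TFc (V := V) (Sum.elim a b),
        g (fun i => T (Sum.inl i)) (fun k => T (Sum.inr k))
      = ∑ T₁ ∈ TFc (V := V) a, ∑ T₂ ∈ TFc (V := V) b,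
          if DJ T₁ T₂ then g T₁ T₂ else 0 := by
  have hrhs : ∀ T₁, (∑ T₂ ∈ TFc (V := V) b, if DJ T₁ T₂ then g T₁ T₂ else 0)
      = ∑ T₂ ∈ (TFc (V := V) b).filter (fun T₂ => DJ T₁ T₂), g T₁ T₂ :=
    fun T₁ => (Finset.sum_filter _ _).symm
  rw [Finset.sum_congr rfl (fun T₁ _ => hrhs T₁)]
  rw [Finset.sum_sigma' (TFc (V := V) a) (fun T₁ => (TFc (V := V) b).filter (fun T₂ => DJ T₁ T₂))
    (fun T₁ T₂ => g T₁ T₂)]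
  refine Finset.sum_nbij'
    (fun T => (⟨fun i => T (Sum.inl i), fun k => T (Sum.inr k)⟩ :
      Σ _ : Fin δ₁ → Finset V, Fin δ₂ → Finset V))
    (fun p => Sum.elim p.1 p.2) ?_ ?_ ?_ ?_ ?_
  · intro T hT
    simp only [TFc, Finset.mem_filter, Finset.mem_univ, true_and, Finset.mem_sigma] at hT ⊢
    obtain ⟨hpd, hc⟩ := hT
    refine ⟨⟨fun i i' h => hpd _ _ (fun hc' => h (Sum.inl.inj hc')), fun i => hc (Sum.inl i)⟩,
      ⟨fun k k' h => hpd _ _ (fun hc' => h (Sum.inr.inj hc')), fun k => hc (Sum.inr k)⟩,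
      fun i k => hpd (Sum.inl i) (Sum.inr k) (by simp)⟩
  · intro p hp
    simp only [TFc, Finset.mem_filter, Finset.mem_univ, true_and, Finset.mem_sigma] at hp ⊢
    obtain ⟨⟨hpd1, hc1⟩, ⟨hpd2, hc2⟩, hdj⟩ := hp
    constructor
    · rintro (i | k) (i' | k') h
      · exact hpd1 i i' (fun hc' => h (by rw [hc']))
      · exact hdj i k'
      · exact (hdj i' k).symm
      · exact hpd2 k k' (fun hc' => h (by rw [hc']))
    · rintro (i | k)
      · exact hc1 i
      · exact hc2 k
  · intro T _
    funext x
    cases x <;> rfl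
  · intro p _
    rfl
  · intro T _
    rfl

end Two
-- part 7
set_option maxHeartbeats 1000000 in
lemma keyAB {δ₁ δ₂ : ℕ} (ω : ℝ) (f₁ f₂ : ℕ → V → ℝ) (a : Fin δ₁ → ℕ) (b : Fin δ₂ → ℕ) :
    ∑ T₁ ∈ TFc (V := V) a, ∑ T₂ ∈ TFc (V := V) b,
        MS δ₁ a * (MS δ₂ b *
          (if DJ T₁ T₂ then (MS δ₁ a * MS δ₂ b) ^ ω * (FP f₁ T₁ * FP f₂ T₂) else 0))
      = ((δ₁.factorial : ℝ) ^ (1 + ω) /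
            ∏ i : Fin δ₁,
              (((i.1 + 1).factorial : ℝ) ^ ((1 + ω) * (a i : ℝ)) * ((a i).factorial : ℝ))) *
        ((δ₂.factorial : ℝ) ^ (1 + ω) /
            ∏ i : Fin δ₂,
              (((i.1 + 1).factorial : ℝ) ^ ((1 + ω) * (b i : ℝ)) * ((b i).factorial : ℝ))) *
        ∑ s ∈ Finset.univ.filter
            (fun s : ((Σ i : Fin δ₁, Fin (a i)) ⊕ (Σ k : Fin δ₂, Fin (b k))) → V =>
              Function.Injective s),
          (∏ i : Fin δ₁, ∏ j : Fin (a i), f₁ (i.1 + 1) (s (Sum.inl ⟨i, j⟩))) *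
            ∏ k : Fin δ₂, ∏ l : Fin (b k), f₂ (k.1 + 1) (s (Sum.inr ⟨k, l⟩)) := by
  classical
  set C₁ : ℝ := (δ₁.factorial : ℝ) ^ (1 + ω) /
      ∏ i : Fin δ₁,
        (((i.1 + 1).factorial : ℝ) ^ ((1 + ω) * (a i : ℝ)) * ((a i).factorial : ℝ)) with hC₁
  set C₂ : ℝ := (δ₂.factorial : ℝ) ^ (1 + ω) /
      ∏ i : Fin δ₂,
        (((i.1 + 1).factorial : ℝ) ^ ((1 + ω) * (b i : ℝ)) * ((b i).factorial : ℝ)) with hC₂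
  -- transform the s-sum
  have hstep1 : ∑ s ∈ Finset.univ.filter
        (fun s : ((Σ i : Fin δ₁, Fin (a i)) ⊕ (Σ k : Fin δ₂, Fin (b k))) → V =>
          Function.Injective s),
        ((∏ i : Fin δ₁, ∏ j : Fin (a i), f₁ (i.1 + 1) (s (Sum.inl ⟨i, j⟩))) *
          ∏ k : Fin δ₂, ∏ l : Fin (b k), f₂ (k.1 + 1) (s (Sum.inr ⟨k, l⟩)))
      = ∑ σ ∈ Finset.univ.filter
          (fun σ : (Σ x : Fin δ₁ ⊕ Fin δ₂, Fin (Sum.elim a b x)) → V =>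
            Function.Injective σ),
          (FP f₁ (fun i => rows (Sum.elim a b) σ (Sum.inl i)) *
            FP f₂ (fun k => rows (Sum.elim a b) σ (Sum.inr k))) := by
    rw [sum_inj_transport a b]
    apply Finset.sum_congr rfl
    intro σ hσ
    rw [Finset.mem_filter] at hσ
    have hinj := hσ.2
    congr 1
    · rw [FP]
      apply Finset.prod_congr rfl
      intro i _
      exact (Finset.prod_image (f := fun u => f₁ (i.1 + 1) u)
        (g := fun j : Fin (Sum.elim a b (Sum.inl i)) => σ ⟨Sum.inl i, j⟩)
        (s := Finset.univ)
        (fun x _ y _ h => row_inj hinj (Sum.inl i) h)).symm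
    · rw [FP]
      apply Finset.prod_congr rfl
      intro k _
      exact (Finset.prod_image (f := fun u => f₂ (k.1 + 1) u)
        (g := fun l : Fin (Sum.elim a b (Sum.inr k)) => σ ⟨Sum.inr k, l⟩)
        (s := Finset.univ)
        (fun x _ y _ h => row_inj hinj (Sum.inr k) h)).symm
  rw [hstep1]
  have hstep2 : ∑ σ ∈ Finset.univ.filter
        (fun σ : (Σ x : Fin δ₁ ⊕ Fin δ₂, Fin (Sum.elim a b x)) → V =>
          Function.Injective σ),
        (FP f₁ (fun i => rows (Sum.elim a b) σ (Sum.inl i)) *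
          FP f₂ (fun k => rows (Sum.elim a b) σ (Sum.inr k)))
      = ∑ T ∈ TFc (V := V) (Sum.elim a b),
          (∏ x : Fin δ₁ ⊕ Fin δ₂, ((Sum.elim a b x).factorial : ℝ)) *
            (FP f₁ (fun i => T (Sum.inl i)) * FP f₂ (fun k => T (Sum.inr k))) :=
    SUM3 (Sum.elim a b)
      (fun T => FP f₁ (fun i => T (Sum.inl i)) * FP f₂ (fun k => T (Sum.inr k)))
  rw [hstep2]
  have hfacsplit : (∏ x : Fin δ₁ ⊕ Fin δ₂, ((Sum.elim a b x).factorial : ℝ))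
      = (∏ i : Fin δ₁, ((a i).factorial : ℝ)) * ∏ k : Fin δ₂, ((b k).factorial : ℝ) :=
    Fintype.prod_sum_type _
  have hstep3 : ∑ T ∈ TFc (V := V) (Sum.elim a b),
        (∏ x : Fin δ₁ ⊕ Fin δ₂, ((Sum.elim a b x).factorial : ℝ)) *
          (FP f₁ (fun i => T (Sum.inl i)) * FP f₂ (fun k => T (Sum.inr k)))
      = ∑ T₁ ∈ TFc (V := V) a, ∑ T₂ ∈ TFc (V := V) b,
          if DJ T₁ T₂ then
            (∏ x : Fin δ₁ ⊕ Fin δ₂, ((Sum.elim a b x).factorial : ℝ)) * (FP f₁ T₁ * FP f₂ T₂)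
          else 0 :=
    split_TFc a b (fun T₁ T₂ =>
      (∏ x : Fin δ₁ ⊕ Fin δ₂, ((Sum.elim a b x).factorial : ℝ)) * (FP f₁ T₁ * FP f₂ T₂))
  rw [hstep3]
  rw [Finset.mul_sum]
  apply Finset.sum_congr rfl
  intro T₁ _
  rw [Finset.mul_sum]
  apply Finset.sum_congr rfl
  intro T₂ _
  by_cases hdj : DJ T₁ T₂
  · rw [if_pos hdj, if_pos hdj]
    have h1 := scalar_one_side δ₁ ω a
    have h2 := scalar_one_side δ₂ ω b
    rw [← hC₁] at h1
    rw [← hC₂] at h2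
    have hm : (MS δ₁ a * MS δ₂ b) ^ ω = MS δ₁ a ^ ω * MS δ₂ b ^ ω :=
      Real.mul_rpow (le_of_lt (MS_pos δ₁ a)) (le_of_lt (MS_pos δ₂ b))
    rw [hm, hfacsplit]
    calc MS δ₁ a * (MS δ₂ b * (MS δ₁ a ^ ω * MS δ₂ b ^ ω * (FP f₁ T₁ * FP f₂ T₂)))
        = (MS δ₁ a * MS δ₁ a ^ ω) * ((MS δ₂ b * MS δ₂ b ^ ω) * (FP f₁ T₁ * FP f₂ T₂)) := by
          ring
      _ = (C₁ * ∏ i : Fin δ₁, ((a i).factorial : ℝ)) *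
            ((C₂ * ∏ k : Fin δ₂, ((b k).factorial : ℝ)) * (FP f₁ T₁ * FP f₂ T₂)) := by
          rw [h1, h2]
      _ = C₁ * C₂ *
            ((∏ i : Fin δ₁, ((a i).factorial : ℝ)) * (∏ k : Fin δ₂, ((b k).factorial : ℝ)) *
              (FP f₁ T₁ * FP f₂ T₂)) := by ring
  · rw [if_neg hdj, if_neg hdj]
    simp
-- part 8
set_option maxHeartbeats 1000000 in
theorem main_lemma_first_step' {δ₁ δ₂ : ℕ}
    (hδ₁ : 1 ≤ δ₁) (hδ₂ : 1 ≤ δ₂) (ω : ℝ) (f₁ f₂ : ℕ → V → ℝ) :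
    (∑ v : Fin δ₁ → V,
      ∑ w ∈ Finset.univ.filter (fun w : Fin δ₂ → V => ∀ j t, w j ≠ v t),
        (Dfac v * Dfac w) ^ ω *
          ((∏ u ∈ Finset.univ.image v, f₁ (multCount v u) u) *
            ∏ u ∈ Finset.univ.image w, f₂ (multCount w u) u)) =
    ∑ᶠ (a : Fin δ₁ → ℕ) (_ : ∑ i, (i.1 + 1) * a i = δ₁),
      ∑ᶠ (b : Fin δ₂ → ℕ) (_ : ∑ i, (i.1 + 1) * b i = δ₂),
        ((δ₁.factorial : ℝ) ^ (1 + ω) /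
            ∏ i : Fin δ₁,
              (((i.1 + 1).factorial : ℝ) ^ ((1 + ω) * (a i : ℝ)) * ((a i).factorial : ℝ))) *
        ((δ₂.factorial : ℝ) ^ (1 + ω) /
            ∏ i : Fin δ₂,
              (((i.1 + 1).factorial : ℝ) ^ ((1 + ω) * (b i : ℝ)) * ((b i).factorial : ℝ))) *
        ∑ s ∈ Finset.univ.filter
            (fun s : ((Σ i : Fin δ₁, Fin (a i)) ⊕ (Σ k : Fin δ₂, Fin (b k))) → V =>
              Function.Injective s),
          (∏ i : Fin δ₁, ∏ j : Fin (a i), f₁ (i.1 + 1) (s (Sum.inl ⟨i, j⟩))) *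
            ∏ k : Fin δ₂, ∏ l : Fin (b k), f₂ (k.1 + 1) (s (Sum.inr ⟨k, l⟩)) := by
  classical
  have hL : (∑ v : Fin δ₁ → V,
      ∑ w ∈ Finset.univ.filter (fun w : Fin δ₂ → V => ∀ j t, w j ≠ v t),
        (Dfac v * Dfac w) ^ ω *
          ((∏ u ∈ Finset.univ.image v, f₁ (multCount v u) u) *
            ∏ u ∈ Finset.univ.image w, f₂ (multCount w u) u))
      = ∑ a ∈ Prof δ₁, ∑ b ∈ Prof δ₂, ∑ T₁ ∈ TFc (V := V) a, ∑ T₂ ∈ TFc (V := V) b,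
          MS δ₁ a * (MS δ₂ b *
            (if DJ T₁ T₂ then (MS δ₁ a * MS δ₂ b) ^ ω * (FP f₁ T₁ * FP f₂ T₂) else 0)) := by
    calc (∑ v : Fin δ₁ → V,
          ∑ w ∈ Finset.univ.filter (fun w : Fin δ₂ → V => ∀ j t, w j ≠ v t),
            (Dfac v * Dfac w) ^ ω *
              ((∏ u ∈ Finset.univ.image v, f₁ (multCount v u) u) *
                ∏ u ∈ Finset.univ.image w, f₂ (multCount w u) u))
        = ∑ v : Fin δ₁ → V, ∑ w : Fin δ₂ → V,
            if ∀ j t, w j ≠ v t then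
              (Dfac v * Dfac w) ^ ω *
                ((∏ u ∈ Finset.univ.image v, f₁ (multCount v u) u) *
                  ∏ u ∈ Finset.univ.image w, f₂ (multCount w u) u)
            else 0 :=
          Finset.sum_congr rfl fun v _ => Finset.sum_filter _ _
      _ = ∑ v : Fin δ₁ → V, ∑ w : Fin δ₂ → V,
            if DJ (Tv v) (Tv w) then
              (MT (Tv v) * MT (Tv w)) ^ ω * (FP f₁ (Tv v) * FP f₂ (Tv w))
            else 0 := by
          refine Finset.sum_congr rfl fun v _ => Finset.sum_congr rfl fun w _ => ?_
          rw [Dfac_eq v, Dfac_eq w, prodF' v f₁, prodF' w f₂]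
          exact if_congr (avoid_iff v w) rfl rfl
      _ = ∑ v : Fin δ₁ → V, ∑ T₂ ∈ TF (V := V) δ₂,
            MT T₂ * (if DJ (Tv v) T₂ then
              (MT (Tv v) * MT T₂) ^ ω * (FP f₁ (Tv v) * FP f₂ T₂) else 0) :=
          Finset.sum_congr rfl fun v _ => SUM1T
            (fun T₂ => if DJ (Tv v) T₂ then
              (MT (Tv v) * MT T₂) ^ ω * (FP f₁ (Tv v) * FP f₂ T₂) else 0)
      _ = ∑ T₁ ∈ TF (V := V) δ₁, MT T₁ * ∑ T₂ ∈ TF (V := V) δ₂,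
            MT T₂ * (if DJ T₁ T₂ then
              (MT T₁ * MT T₂) ^ ω * (FP f₁ T₁ * FP f₂ T₂) else 0) :=
          SUM1T (fun T₁ => ∑ T₂ ∈ TF (V := V) δ₂,
            MT T₂ * (if DJ T₁ T₂ then
              (MT T₁ * MT T₂) ^ ω * (FP f₁ T₁ * FP f₂ T₂) else 0))
      _ = ∑ a ∈ Prof δ₁, ∑ T₁ ∈ TFc (V := V) a, MT T₁ * ∑ T₂ ∈ TF (V := V) δ₂,
            MT T₂ * (if DJ T₁ T₂ then
              (MT T₁ * MT T₂) ^ ω * (FP f₁ T₁ * FP f₂ T₂) else 0) :=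
          group_cards _
      _ = ∑ a ∈ Prof δ₁, ∑ T₁ ∈ TFc (V := V) a, MT T₁ * ∑ b ∈ Prof δ₂,
            ∑ T₂ ∈ TFc (V := V) b,
            MT T₂ * (if DJ T₁ T₂ then
              (MT T₁ * MT T₂) ^ ω * (FP f₁ T₁ * FP f₂ T₂) else 0) :=
          Finset.sum_congr rfl fun a _ => Finset.sum_congr rfl fun T₁ _ =>
            congrArg (MT T₁ * ·) (group_cards _)
      _ = ∑ a ∈ Prof δ₁, ∑ T₁ ∈ TFc (V := V) a, ∑ b ∈ Prof δ₂,
            ∑ T₂ ∈ TFc (V := V) b,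
            MS δ₁ a * (MS δ₂ b *
              (if DJ T₁ T₂ then (MS δ₁ a * MS δ₂ b) ^ ω * (FP f₁ T₁ * FP f₂ T₂) else 0)) := by
          refine Finset.sum_congr rfl fun a _ => Finset.sum_congr rfl fun T₁ hT₁ => ?_
          have ha1 : MT T₁ = MS δ₁ a := MT_eq_MS (mem_TFc.mp hT₁).2
          rw [Finset.mul_sum]
          refine Finset.sum_congr rfl fun b _ => ?_
          rw [Finset.mul_sum]
          refine Finset.sum_congr rfl fun T₂ hT₂ => ?_
          have hb1 : MT T₂ = MS δ₂ b := MT_eq_MS (mem_TFc.mp hT₂).2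
          rw [ha1, hb1]
      _ = ∑ a ∈ Prof δ₁, ∑ b ∈ Prof δ₂, ∑ T₁ ∈ TFc (V := V) a,
            ∑ T₂ ∈ TFc (V := V) b,
            MS δ₁ a * (MS δ₂ b *
              (if DJ T₁ T₂ then (MS δ₁ a * MS δ₂ b) ^ ω * (FP f₁ T₁ * FP f₂ T₂) else 0)) :=
          Finset.sum_congr rfl fun a _ => Finset.sum_comm
  rw [hL, finsum_cond_eq_sum_of_cond_iff _ (fun {x} _ => Iff.symm mem_Prof)]
  refine Finset.sum_congr rfl fun a _ => ?_
  rw [finsum_cond_eq_sum_of_cond_iff _ (fun {x} _ => Iff.symm mem_Prof)]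
  refine Finset.sum_congr rfl fun b _ => ?_
  exact keyAB ω f₁ f₂ a b

end Aux

theorem main_lemma_first_step {V : Type*} [Fintype V] (δ₁ δ₂ : ℕ)
    (hδ₁ : 1 ≤ δ₁) (hδ₂ : 1 ≤ δ₂) (ω : ℝ) (f₁ f₂ : ℕ → V → ℝ) :
    (∑ v : Fin δ₁ → V,
      ∑ w ∈ Finset.univ.filter (fun w : Fin δ₂ → V => ∀ j t, w j ≠ v t),
        (Dfac v * Dfac w) ^ ω *
          ((∏ u ∈ Finset.univ.image v, f₁ (multCount v u) u) *
            ∏ u ∈ Finset.univ.image w, f₂ (multCount w u) u)) =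
    ∑ᶠ (a : Fin δ₁ → ℕ) (_ : ∑ i, (i.1 + 1) * a i = δ₁),
      ∑ᶠ (b : Fin δ₂ → ℕ) (_ : ∑ i, (i.1 + 1) * b i = δ₂),
        ((δ₁.factorial : ℝ) ^ (1 + ω) /
            ∏ i : Fin δ₁,
              (((i.1 + 1).factorial : ℝ) ^ ((1 + ω) * (a i : ℝ)) * ((a i).factorial : ℝ))) *
        ((δ₂.factorial : ℝ) ^ (1 + ω) /
            ∏ i : Fin δ₂,
              (((i.1 + 1).factorial : ℝ) ^ ((1 + ω) * (b i : ℝ)) * ((b i).factorial : ℝ))) *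
        ∑ s ∈ Finset.univ.filter
            (fun s : ((Σ i : Fin δ₁, Fin (a i)) ⊕ (Σ k : Fin δ₂, Fin (b k))) → V =>
              Function.Injective s),
          (∏ i : Fin δ₁, ∏ j : Fin (a i), f₁ (i.1 + 1) (s (Sum.inl ⟨i, j⟩))) *
            ∏ k : Fin δ₂, ∏ l : Fin (b k), f₂ (k.1 + 1) (s (Sum.inr ⟨k, l⟩)) :=
  main_lemma_first_step' hδ₁ hδ₂ ω f₁ f₂
end

section
/- With λ defined as in the context and δ₂ ≥ 2, for all i ∈ [δ₁] and all (y,z) ∈ ℕ^{δ₁} × ℕ^{δ₂} with z_{δ₂} = 0: λ^{(i)}_{(y, z + (δ₂+1)·e_{δ₂})} = λ^{(i)}_{(y, z + e_{δ₂−1})}, where e_k denotes the k-th standard unit vector of ℕ^{δ₂}. -/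
open scoped Classical

/-- `lam δ₁ δ₂ a γ i y z` is the quantity `λ^{(i)}_{(y,z)}` of the paper:
`a_i` minus the total `γ`-weight (with coordinate-`i` multiplicities) of all
pairs `(ŷ, ẑ)` that precede `(y, z)` in the construction order. -/
noncomputable def lam (δ₁ δ₂ : ℕ) (a : Fin δ₁ → ℤ)
    (γ : ((Fin δ₁ → ℕ) × (Fin δ₂ → ℕ)) →₀ ℤ)
    (i : Fin δ₁) (y : Fin δ₁ → ℕ) (z : Fin δ₂ → ℕ) : ℤ :=
  a i
  - ∑ᶠ zh : Fin δ₂ → ℕ,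
      ∑ f : Fin δ₁,
        ∑ᶠ (u : Fin δ₁ → ℕ)
          (_ : (∀ k, k < f → u k = y k) ∧ u f < y f ∧ ∀ l, f < l → u l ≤ δ₁),
          (u i : ℤ) * γ (u, zh)
  - ∑ f : Fin δ₂,
      ∑ᶠ (w : Fin δ₂ → ℕ)
        (_ : (∀ k, k < f → w k = z k) ∧ w f < z f ∧ ∀ l, f < l → w l ≤ δ₂),
        (y i : ℤ) * γ (y, w)

/-- `mu δ₁ δ₂ b γ i y z` is the quantity `μ^{(i)}_{(y,z)}` of the paper. -/
noncomputable def mu (δ₁ δ₂ : ℕ) (b : Fin δ₂ → ℤ)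
    (γ : ((Fin δ₁ → ℕ) × (Fin δ₂ → ℕ)) →₀ ℤ)
    (i : Fin δ₂) (y : Fin δ₁ → ℕ) (z : Fin δ₂ → ℕ) : ℤ :=
  b i
  - ∑ᶠ zh : Fin δ₂ → ℕ,
      ∑ f : Fin δ₁,
        ∑ᶠ (u : Fin δ₁ → ℕ)
          (_ : (∀ k, k < f → u k = y k) ∧ u f < y f ∧ ∀ l, f < l → u l ≤ δ₁),
          (zh i : ℤ) * γ (u, zh)
  - ∑ f : Fin δ₂,
      ∑ᶠ (w : Fin δ₂ → ℕ)
        (_ : (∀ k, k < f → w k = z k) ∧ w f < z f ∧ ∀ l, f < l → w l ≤ δ₂),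
        (w i : ℤ) * γ (y, w)

theorem claim_lam_carry (δ₁ δ₂ : ℕ) (hδ₁ : 1 ≤ δ₁) (hδ₂ : 2 ≤ δ₂)
    (a : Fin δ₁ → ℤ) (γ : ((Fin δ₁ → ℕ) × (Fin δ₂ → ℕ)) →₀ ℤ)
    (i : Fin δ₁) (y : Fin δ₁ → ℕ) (z : Fin δ₂ → ℕ)
    (hz : z ⟨δ₂ - 1, by omega⟩ = 0) :
    lam δ₁ δ₂ a γ i y (z + fun k => if k.1 = δ₂ - 1 then δ₂ + 1 else 0) =
      lam δ₁ δ₂ a γ i y (z + fun k => if k.1 = δ₂ - 2 then 1 else 0) := by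
  classical
  set g : (Fin δ₂ → ℕ) → ℤ := fun w => (y i : ℤ) * γ (y, w) with hg
  set z1 : Fin δ₂ → ℕ := z + fun k => if k.1 = δ₂ - 1 then δ₂ + 1 else 0 with hz1def
  set z2 : Fin δ₂ → ℕ := z + fun k => if k.1 = δ₂ - 2 then 1 else 0 with hz2def
  set P : Fin δ₂ → (Fin δ₂ → ℕ) → Set (Fin δ₂ → ℕ) := fun f zz =>
    {w | (∀ k, k < f → w k = zz k) ∧ w f < zz f ∧ ∀ l, f < l → w l ≤ δ₂} with hP
  have hgfin : (Function.support g).Finite := by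
    apply Set.Finite.subset (Set.Finite.preimage
      (f := fun w : Fin δ₂ → ℕ => ((y, w) : (Fin δ₁ → ℕ) × (Fin δ₂ → ℕ)))
      (Set.injOn_of_injective (fun w w' h => (Prod.mk.injEq _ _ _ _ ▸ h).2))
      γ.support.finite_toSet)
    intro w hw
    simp only [Function.mem_support, hg] at hw
    simp only [Set.mem_preimage, Finset.mem_coe, Finsupp.mem_support_iff]
    intro h; exact hw (by rw [h, mul_zero])
  set F1 : Fin δ₂ := ⟨δ₂ - 1, by omega⟩ with hF1
  set F2 : Fin δ₂ := ⟨δ₂ - 2, by omega⟩ with hF2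
  have hF1v : (F1 : ℕ) = δ₂ - 1 := rfl
  have hF2v : (F2 : ℕ) = δ₂ - 2 := rfl
  have hzval1 : ∀ k : Fin δ₂, z1 k = if k.1 = δ₂ - 1 then δ₂ + 1 else z k := by
    intro k
    simp only [hz1def, Pi.add_apply]
    split
    · rename_i h
      have hk : k = F1 := Fin.ext (by rw [hF1v]; exact h)
      rw [hk, hz]; omega
    · simp
  have hzval2 : ∀ k : Fin δ₂, z2 k = z k + if k.1 = δ₂ - 2 then 1 else 0 := fun k => rfl
  have hA : ∀ k : Fin δ₂, k.1 < δ₂ - 2 → z1 k = z k ∧ z2 k = z k := by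
    intro k hk
    rw [hzval1, hzval2, if_neg (by omega), if_neg (by omega)]
    simp
  have hB : z1 F2 = z F2 := by rw [hzval1, if_neg (by rw [hF2v]; omega)]
  have hC : z2 F2 = z F2 + 1 := by rw [hzval2, if_pos hF2v]
  have hD : z1 F1 = δ₂ + 1 := by rw [hzval1, if_pos hF1v]
  have hE : z2 F1 = 0 := by
    rw [hzval2, if_neg (by rw [hF1v]; omega), hz]
  have main : (∑ f : Fin δ₂, ∑ᶠ w ∈ P f z1, g w) = ∑ f : Fin δ₂, ∑ᶠ w ∈ P f z2, g w := by
    have hne : F2 ≠ F1 := by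
      intro h
      have := congrArg Fin.val h
      rw [hF1v, hF2v] at this
      omega
    have hmem2 : F2 ∈ Finset.univ.erase F1 := Finset.mem_erase.mpr ⟨hne, Finset.mem_univ F2⟩
    rw [← Finset.sum_erase_add Finset.univ (fun f => ∑ᶠ w ∈ P f z1, g w) (Finset.mem_univ F1),
      ← Finset.sum_erase_add Finset.univ (fun f => ∑ᶠ w ∈ P f z2, g w) (Finset.mem_univ F1),
      ← Finset.sum_erase_add _ (fun f => ∑ᶠ w ∈ P f z1, g w) hmem2,
      ← Finset.sum_erase_add _ (fun f => ∑ᶠ w ∈ P f z2, g w) hmem2]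
    have hrest : ∑ f ∈ (Finset.univ.erase F1).erase F2, (∑ᶠ w ∈ P f z1, g w)
        = ∑ f ∈ (Finset.univ.erase F1).erase F2, (∑ᶠ w ∈ P f z2, g w) := by
      refine Finset.sum_congr rfl fun f hf => ?_
      simp only [Finset.mem_erase, Finset.mem_univ, and_true] at hf
      have hf2 : f.1 < δ₂ - 2 := by
        have h2 := f.2
        rcases hf with ⟨ha, hb⟩
        have ha' : f.1 ≠ δ₂ - 2 := fun h => ha (Fin.ext (h.trans hF2v.symm))
        have hb' : f.1 ≠ δ₂ - 1 := fun h => hb (Fin.ext (h.trans hF1v.symm))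
        omega
      have hzz : ∀ k : Fin δ₂, k ≤ f → z1 k = z2 k := by
        intro k hk
        have hk' : k.1 ≤ f.1 := Fin.le_def.mp hk
        rw [(hA k (by omega)).1, (hA k (by omega)).2]
      have hPz : P f z1 = P f z2 := by
        ext w
        simp only [hP, Set.mem_setOf_eq]
        constructor
        · rintro ⟨h1, h2, h3⟩
          exact ⟨fun k hk => (h1 k hk).trans (hzz k hk.le),
            by rw [← hzz f le_rfl]; exact h2, h3⟩
        · rintro ⟨h1, h2, h3⟩
          exact ⟨fun k hk => (h1 k hk).trans (hzz k hk.le).symm,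
            by rw [hzz f le_rfl]; exact h2, h3⟩
      rw [hPz]
    have hSF1z2 : ∑ᶠ w ∈ P F1 z2, g w = 0 := by
      have hempty : P F1 z2 = ∅ := by
        ext w
        simp only [hP, Set.mem_setOf_eq, Set.mem_empty_iff_false, iff_false, not_and]
        intro _ h
        rw [hE] at h
        exact absurd h (Nat.not_lt_zero _)
      rw [hempty, finsum_mem_empty]
    have hF2ltF1 : F2 < F1 := Fin.lt_def.mpr (by rw [hF1v, hF2v]; omega)
    have hunion : P F2 z2 = P F2 z1 ∪ P F1 z1 := by
      ext w
      simp only [hP, Set.mem_setOf_eq, Set.mem_union]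
      constructor
      · rintro ⟨h1, h2, h3⟩
        rw [hC] at h2
        rcases lt_or_eq_of_le (Nat.lt_succ_iff.mp h2) with h | h
        · left
          refine ⟨fun k hk => ?_, by rw [hB]; exact h, h3⟩
          have hk' : k.1 < δ₂ - 2 := by have := Fin.lt_def.mp hk; rw [hF2v] at this; omega
          rw [h1 k hk, (hA k hk').2, (hA k hk').1]
        · right
          refine ⟨fun k hk => ?_, by rw [hD]; have := h3 F1 hF2ltF1; omega, fun l hl => ?_⟩
          · by_cases hkF2 : k = F2
            · rw [hkF2, hB, h]
            · have hk' : k.1 < δ₂ - 2 := by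
                have h2 := k.2
                have hkv : k.1 < δ₂ - 1 := by
                  have := Fin.lt_def.mp hk; rw [hF1v] at this; omega
                have : k.1 ≠ δ₂ - 2 := fun hh => hkF2 (Fin.ext (hh.trans hF2v.symm))
                omega
              rw [h1 k (Fin.lt_def.mpr (by rw [hF2v]; omega)),
                (hA k hk').2, (hA k hk').1]
          · exact absurd (Fin.lt_def.mp hl) (by have := l.2; rw [hF1v]; omega)
      · rintro (⟨h1, h2, h3⟩ | ⟨h1, h2, h3⟩)
        · refine ⟨fun k hk => ?_, by rw [hC]; rw [hB] at h2; omega, h3⟩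
          have hk' : k.1 < δ₂ - 2 := by have := Fin.lt_def.mp hk; rw [hF2v] at this; omega
          rw [h1 k hk, (hA k hk').1, (hA k hk').2]
        · refine ⟨fun k hk => ?_, ?_, fun l hl => ?_⟩
          · have hk' : k.1 < δ₂ - 2 := by have := Fin.lt_def.mp hk; rw [hF2v] at this; omega
            rw [h1 k (Fin.lt_def.mpr (by rw [hF1v]; omega)),
              (hA k hk').1, (hA k hk').2]
          · rw [hC, h1 F2 hF2ltF1, hB]
            omega
          · have hl1 : l.1 = δ₂ - 1 := by
              have h2 := l.2
              have hlv := Fin.lt_def.mp hl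
              rw [hF2v] at hlv
              omega
            have hlF1 : l = F1 := Fin.ext (hl1.trans hF1v.symm)
            rw [hlF1]
            rw [hD] at h2
            omega
    have hdisj : Disjoint (P F2 z1) (P F1 z1) := by
      rw [Set.disjoint_left]
      rintro w ⟨_, hw2, _⟩ ⟨hw1', _, _⟩
      rw [hB] at hw2
      rw [hw1' F2 hF2ltF1, hB] at hw2
      omega
    rw [hrest, hSF1z2, hunion,
      finsum_mem_union' hdisj (hgfin.inter_of_right _) (hgfin.inter_of_right _)]
    ring
  have conv1 : ∀ zz : Fin δ₂ → ℕ,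
      (∑ f : Fin δ₂, ∑ᶠ (w : Fin δ₂ → ℕ)
        (_ : (∀ k, k < f → w k = zz k) ∧ w f < zz f ∧ ∀ l, f < l → w l ≤ δ₂),
        (y i : ℤ) * γ (y, w)) = ∑ f : Fin δ₂, ∑ᶠ w ∈ P f zz, g w := fun zz => rfl
  unfold lam
  rw [conv1 z1, conv1 z2, main]
end
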